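/- arXiv:2007.06937 — 3 statements merged into one kernel-verified Lean document; each statement's English description precedes it below -/
import Mathlib

section
/- Let g_1,…,g_T be nonzero vectors in ℝ^d and let β* ∈ Δ_T (the probability simplex) minimize ‖∑_i β_i g_i/‖g_i‖‖² over Δ_T, and set d_b = ∑_i β*_i g_i/‖g_i‖. Then for every index i with β*_i > 0, ⟨d_b, g_i⟩ = ‖d_b‖² ‖g_i‖. -/
/-!
The minimiser `d_b` of `‖·‖²` over the convex hull `K` of the normalised gradients `uⱼ` satisfies
the first-order condition `⟪d_b, y - d_b⟫ ≥ 0` for all `y ∈ K`. Taking `y = uᵢ` gives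
`⟪d_b, uᵢ⟫ ≥ ‖d_b‖²`. When `βᵢ > 0`, weight can also be moved away from `uᵢ`:
`y = (1 + βᵢ) d_b - βᵢ uᵢ` still lies in `K`, which gives the reverse inequality.
Multiplying `⟪d_b, uᵢ⟫ = ‖d_b‖²` by `‖gᵢ‖` gives the claim.
-/

open RealInnerProductSpace

theorem Convex.inner_sub_nonneg_of_isMinOn_norm_sq {E : Type*} [NormedAddCommGroup E]
    [InnerProductSpace ℝ E] {K : Set E} (hK : Convex ℝ K) {x y : E} (hx : x ∈ K)
    (hmin : IsMinOn (fun z => ‖z‖ ^ 2) K x) (hy : y ∈ K) : 0 ≤ ⟪x, y - x⟫ := by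
  have h := hmin.localize.hasFDerivWithinAt_nonneg
    (hasStrictFDerivAt_norm_sq x).hasFDerivAt.hasFDerivWithinAt
    (sub_mem_posTangentConeAt_of_segment_subset (hK.segment_subset hx hy))
  simpa only [smul_apply, coe_innerSL_apply, nsmul_eq_mul, Nat.cast_ofNat,
    Nat.ofNat_pos, mul_nonneg_iff_of_pos_left] using h

theorem smul_sub_smul_single_mem_stdSimplex {ι : Type*} [Fintype ι] [DecidableEq ι]
    {β : ι → ℝ} (hβ : β ∈ stdSimplex ℝ ι) (i : ι) :
    (1 + β i) • β - β i • Pi.single i 1 ∈ stdSimplex ℝ ι := by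
  refine ⟨fun j => ?_, ?_⟩
  · rcases eq_or_ne j i with rfl | hj
    · simp only [Pi.sub_apply, Pi.smul_apply, smul_eq_mul, Pi.single_eq_same, mul_one, sub_nonneg]
      nlinarith [hβ.1 j]
    · simp only [Pi.sub_apply, Pi.smul_apply, smul_eq_mul, Pi.single_eq_of_ne hj, mul_zero,
        sub_zero]
      nlinarith [hβ.1 j, hβ.1 i]
  · simp [Finset.sum_sub_distrib, ← Finset.mul_sum, hβ.2]

theorem inner_eq_norm_sq_of_isMinOn_stdSimplex {ι E : Type*} [Fintype ι]
    [NormedAddCommGroup E] [InnerProductSpace ℝ E] (u : ι → E) {β : ι → ℝ}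
    (hβ : β ∈ stdSimplex ℝ ι)
    (hmin : IsMinOn (fun b => ‖Fintype.linearCombination ℝ u b‖ ^ 2) (stdSimplex ℝ ι) β)
    {i : ι} (hi : 0 < β i) :
    ⟪Fintype.linearCombination ℝ u β, u i⟫ = ‖Fintype.linearCombination ℝ u β‖ ^ 2 := by
  classical
  set L := Fintype.linearCombination ℝ u
  have hK : Convex ℝ (L '' stdSimplex ℝ ι) := (convex_stdSimplex ℝ ι).linear_image L
  have hminK : IsMinOn (fun z => ‖z‖ ^ 2) (L '' stdSimplex ℝ ι) (L β) := by
    rintro _ ⟨β', hβ', rfl⟩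
    exact hmin hβ'
  have first_order {y : ι → ℝ} (hy : y ∈ stdSimplex ℝ ι) : 0 ≤ ⟪L β, L y - L β⟫ :=
    hK.inner_sub_nonneg_of_isMinOn_norm_sq (Set.mem_image_of_mem L hβ) hminK
      (Set.mem_image_of_mem L hy)
  have toward : 0 ≤ ⟪L β, u i - L β⟫ := by
    simpa [L] using first_order (single_mem_stdSimplex ℝ i)
  have away : 0 ≤ β i * ⟪L β, L β - u i⟫ := by
    have h := first_order (smul_sub_smul_single_mem_stdSimplex hβ i)
    rw [map_sub, map_smul, map_smul, Fintype.linearCombination_apply_single, one_smul] at h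
    rw [← real_inner_smul_right]
    convert h using 2
    module
  rw [inner_sub_right, real_inner_self_eq_norm_sq] at toward away
  nlinarith

theorem edm_equiangular {d T : ℕ} (g : Fin T → EuclideanSpace ℝ (Fin d))
    (hg : ∀ i, g i ≠ 0)
    (β : Fin T → ℝ) (hβ0 : ∀ i, 0 ≤ β i) (hβ1 : ∑ i, β i = 1)
    (hmin : ∀ β' : Fin T → ℝ, (∀ i, 0 ≤ β' i) → ∑ i, β' i = 1 →
      ‖∑ i, β i • (‖g i‖⁻¹ • g i)‖ ^ 2 ≤ ‖∑ i, β' i • (‖g i‖⁻¹ • g i)‖ ^ 2)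
    (db : EuclideanSpace ℝ (Fin d)) (hdb : db = ∑ i, β i • (‖g i‖⁻¹ • g i))
    (i : Fin T) (hi : 0 < β i) :
    ⟪db, g i⟫ = ‖db‖ ^ 2 * ‖g i‖ := by
  have key := inner_eq_norm_sq_of_isMinOn_stdSimplex (fun j => ‖g j‖⁻¹ • g j) ⟨hβ0, hβ1⟩
    (fun β' hβ' => by
      simpa only [Set.mem_ofPred_eq, Fintype.linearCombination_apply] using
        hmin β' hβ'.1 hβ'.2) hi
  rw [Fintype.linearCombination_apply, ← hdb] at key
  calc ⟪db, g i⟫ = ‖g i‖ * ⟪db, ‖g i‖⁻¹ • g i⟫ := by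
        rw [real_inner_smul_right, mul_inv_cancel_left₀ (norm_ne_zero_iff.mpr (hg i))]
    _ = ‖db‖ ^ 2 * ‖g i‖ := by rw [key, mul_comm]
end

section
/- Under the hypotheses of the equiangular direction theorem, if β*_i > 0 for all i = 1,…,T and d_b ≠ 0, then the cosine of the angle between d_b and g_i equals ‖d_b‖ for every i; in particular all these angles are equal. -/
/-!
Write `u i = ‖g i‖⁻¹ • g i`. Shifting weight `t` from `u j` to `u i` keeps `β` in the simplex
for small `|t|` (all `β k > 0`) and moves `d_b` to `d_b + t • (u i - u j)`, so minimality at `t = 0`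
forces `⟪d_b, u i - u j⟫ = 0`. Thus `⟪d_b, u i⟫` does not depend on `i`, and averaging it with the
weights `β` gives `⟪d_b, d_b⟫ = ‖d_b‖²`.
-/

open RealInnerProductSpace Finset

variable {E ι : Type*} [NormedAddCommGroup E] [InnerProductSpace ℝ E]

theorem inner_eq_zero_of_isLocalMin_norm_add_smul_sq {x v : E}
    (h : IsLocalMin (fun t : ℝ => ‖x + t • v‖ ^ 2) 0) : ⟪x, v⟫ = 0 := by
  have hderiv := (((hasDerivAt_id (0 : ℝ)).smul_const v).const_add x).norm_sq
  simpa using h.hasDerivAt_eq_zero hderiv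

section Simplex

variable [Fintype ι] [DecidableEq ι]

theorem add_smul_single_sub_single_mem_stdSimplex {β : ι → ℝ} (hβ : β ∈ stdSimplex ℝ ι)
    {i j : ι} {t : ℝ} (hi : -β i ≤ t) (hj : t ≤ β j) :
    β + t • (Pi.single i 1 - Pi.single j 1) ∈ stdSimplex ℝ ι := by
  refine ⟨fun k => ?_, ?_⟩
  · have := hβ.1 k
    rcases eq_or_ne k i with rfl | hki <;> rcases eq_or_ne k j with rfl | hkj <;> simp [*]
    linarith
  · simp [sum_add_distrib, ← mul_sum, hβ.2]

theorem sum_add_smul_single_sub_single_smul (β : ι → ℝ) (u : ι → E) (i j : ι) (t : ℝ) :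
    ∑ k, (β + t • (Pi.single i 1 - Pi.single j 1) : ι → ℝ) k • u k =
      ∑ k, β k • u k + t • (u i - u j) := by
  simp [add_smul, sub_smul, sum_add_distrib, sum_sub_distrib, Pi.single_apply, smul_sub]

theorem inner_sum_smul_eq_norm_sq_of_isMinOn {u : ι → E} {β : ι → ℝ} (hβ : β ∈ stdSimplex ℝ ι)
    (hpos : ∀ i, 0 < β i)
    (hmin : IsMinOn (fun β' => ‖∑ k, β' k • u k‖ ^ 2) (stdSimplex ℝ ι) β) (i : ι) :
    ⟪∑ k, β k • u k, u i⟫ = ‖∑ k, β k • u k‖ ^ 2 := by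
  set d := ∑ k, β k • u k
  have horth : ∀ j, ⟪d, u i - u j⟫ = 0 := by
    intro j
    apply inner_eq_zero_of_isLocalMin_norm_add_smul_sq
    filter_upwards [Ioo_mem_nhds (neg_neg_of_pos (hpos i)) (hpos j)] with t ht
    rw [zero_smul, add_zero, ← sum_add_smul_single_sub_single_smul]
    exact hmin (add_smul_single_sub_single_mem_stdSimplex hβ ht.1.le ht.2.le)
  calc ⟪d, u i⟫ = ∑ j, β j * ⟪d, u i⟫ := by rw [← sum_mul, hβ.2, one_mul]
    _ = ∑ j, β j * ⟪d, u j⟫ := by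
      refine sum_congr rfl fun j _ => ?_
      rw [← sub_eq_zero, ← mul_sub, ← inner_sub_right, horth j, mul_zero]
    _ = ‖d‖ ^ 2 := by
      rw [← real_inner_self_eq_norm_sq]
      simp only [d, inner_sum, real_inner_smul_right]

end Simplex

theorem edm_equal_angles_general {d T : ℕ} (g : Fin T → EuclideanSpace ℝ (Fin d))
    (β : Fin T → ℝ) (hβ0 : ∀ i, 0 < β i) (hβ1 : ∑ i, β i = 1)
    (hmin : ∀ β' : Fin T → ℝ, (∀ i, 0 ≤ β' i) → ∑ i, β' i = 1 →
      ‖∑ i, β i • (‖g i‖⁻¹ • g i)‖ ^ 2 ≤ ‖∑ i, β' i • (‖g i‖⁻¹ • g i)‖ ^ 2)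
    (db : EuclideanSpace ℝ (Fin d)) (hdb : db = ∑ i, β i • (‖g i‖⁻¹ • g i))
    (hdb0 : db ≠ 0) :
    ∀ i, ⟪db, g i⟫ / (‖db‖ * ‖g i‖) = ‖db‖ := by
  intro i
  have key := inner_sum_smul_eq_norm_sq_of_isMinOn (u := fun k => ‖g k‖⁻¹ • g k)
    ⟨fun k => (hβ0 k).le, hβ1⟩ hβ0 (fun β' hβ' => hmin β' hβ'.1 hβ'.2) i
  rw [← hdb, real_inner_smul_right] at key
  have hgi : ‖g i‖ ≠ 0 := fun h => hdb0 (by simpa [h] using key.symm)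
  have hdbn : ‖db‖ ≠ 0 := norm_ne_zero_iff.mpr hdb0
  field_simp at key ⊢
  linear_combination key

theorem edm_equal_angles {d T : ℕ} (g : Fin T → EuclideanSpace ℝ (Fin d))
    (hg : ∀ i, g i ≠ 0)
    (β : Fin T → ℝ) (hβ0 : ∀ i, 0 < β i) (hβ1 : ∑ i, β i = 1)
    (hmin : ∀ β' : Fin T → ℝ, (∀ i, 0 ≤ β' i) → ∑ i, β' i = 1 →
      ‖∑ i, β i • (‖g i‖⁻¹ • g i)‖ ^ 2 ≤ ‖∑ i, β' i • (‖g i‖⁻¹ • g i)‖ ^ 2)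
    (db : EuclideanSpace ℝ (Fin d)) (hdb : db = ∑ i, β i • (‖g i‖⁻¹ • g i))
    (hdb0 : db ≠ 0) :
    ∀ i, ⟪db, g i⟫ / (‖db‖ * ‖g i‖) = ‖db‖ :=
  edm_equal_angles_general g β hβ0 hβ1 hmin db hdb hdb0
end

section
/- Let g_1,…,g_T be nonzero vectors in ℝ^d such that 0 does not lie in the convex hull of the unit vectors u_i = g_i/‖g_i‖, β* the simplex minimizer of ‖∑ β_i u_i‖², and d_b = ∑ β*_i u_i ≠ 0. Then ⟨d_b, g_i⟩ ≥ ‖d_b‖² ‖g_i‖ > 0 for every i = 1,…,T, so −d_b simultaneously decreases all losses to first order. -/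
open RealInnerProductSpace

section

variable {E : Type*} [NormedAddCommGroup E] [InnerProductSpace ℝ E]

/- The minimum-norm point `v` of a convex set is the projection of `0` onto it, so the
variational inequality `⟪0 - v, w - v⟫ ≤ 0` of the projection holds for every `w` in the set. -/
theorem norm_sq_le_inner_of_isMinOn_norm {K : Set E} (hK : Convex ℝ K) {v : E} (hv : v ∈ K)
    (hmin : IsMinOn (‖·‖) K v) {w : E} (hw : w ∈ K) : ‖v‖ ^ 2 ≤ ⟪v, w⟫ := by
  have : Nonempty K := ⟨⟨v, hv⟩⟩
  have hinf : ‖0 - v‖ = ⨅ w : K, ‖0 - (w : E)‖ := by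
    simp only [zero_sub, norm_neg]
    refine (le_ciInf fun w => hmin w.2).antisymm
      (ciInf_le (f := fun w : K => ‖(w : E)‖) ⟨0, ?_⟩ ⟨v, hv⟩)
    rintro _ ⟨w, rfl⟩
    positivity
  have hvar := (norm_eq_iInf_iff_real_inner_le_zero hK hv).1 hinf w hw
  rw [zero_sub, inner_neg_left, inner_sub_right, real_inner_self_eq_norm_sq] at hvar
  linarith

theorem norm_sq_le_inner_of_isMinOn_stdSimplex {ι : Type*} [Fintype ι] (u : ι → E)
    {β : ι → ℝ} (hβ : β ∈ stdSimplex ℝ ι)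
    (hmin : ∀ β' ∈ stdSimplex ℝ ι, ‖∑ j, β j • u j‖ ≤ ‖∑ j, β' j • u j‖) (i : ι) :
    ‖∑ j, β j • u j‖ ^ 2 ≤ ⟪∑ j, β j • u j, u i⟫ := by
  classical
  let L := Fintype.linearCombination ℝ u
  have hvertex : u i = L (Pi.single i 1) := by
    rw [Fintype.linearCombination_apply_single, one_smul]
  rw [hvertex, ← Fintype.linearCombination_apply]
  refine norm_sq_le_inner_of_isMinOn_norm ((convex_stdSimplex ℝ ι).linear_image L)
    ⟨β, hβ, rfl⟩ ?_ ⟨Pi.single i 1, single_mem_stdSimplex ℝ i, rfl⟩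
  rintro _ ⟨β', hβ', rfl⟩
  exact hmin β' hβ'

theorem inner_inv_norm_smul_mul_norm (x g : E) : ⟪x, ‖g‖⁻¹ • g⟫ * ‖g‖ = ⟪x, g⟫ := by
  rcases eq_or_ne g 0 with rfl | hg
  · simp
  · rw [real_inner_smul_right, mul_right_comm, inv_mul_cancel₀ (norm_ne_zero_iff.2 hg), one_mul]

end

theorem edm_common_descent_general {d T : ℕ} (g : Fin T → EuclideanSpace ℝ (Fin d))
    (hg : ∀ i, g i ≠ 0)
    (β : Fin T → ℝ) (hβ0 : ∀ i, 0 ≤ β i) (hβ1 : ∑ i, β i = 1)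
    (hmin : ∀ β' : Fin T → ℝ, (∀ i, 0 ≤ β' i) → ∑ i, β' i = 1 →
      ‖∑ i, β i • (‖g i‖⁻¹ • g i)‖ ^ 2 ≤ ‖∑ i, β' i • (‖g i‖⁻¹ • g i)‖ ^ 2)
    (db : EuclideanSpace ℝ (Fin d)) (hdb : db = ∑ i, β i • (‖g i‖⁻¹ • g i))
    (hdb0 : db ≠ 0) :
    ∀ i, ‖db‖ ^ 2 * ‖g i‖ ≤ ⟪db, g i⟫ ∧ 0 < ‖db‖ ^ 2 * ‖g i‖ := by
  intro i
  have hopt := norm_sq_le_inner_of_isMinOn_stdSimplex (fun j => ‖g j‖⁻¹ • g j) ⟨hβ0, hβ1⟩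
    (fun β' hβ' => (sq_le_sq₀ (norm_nonneg _) (norm_nonneg _)).1 (hmin β' hβ'.1 hβ'.2)) i
  rw [← hdb] at hopt
  refine ⟨?_, mul_pos (pow_pos (norm_pos_iff.2 hdb0) 2) (norm_pos_iff.2 (hg i))⟩
  calc ‖db‖ ^ 2 * ‖g i‖ ≤ ⟪db, ‖g i‖⁻¹ • g i⟫ * ‖g i‖ := by gcongr
    _ = ⟪db, g i⟫ := inner_inv_norm_smul_mul_norm db (g i)

theorem edm_common_descent {d T : ℕ} (g : Fin T → EuclideanSpace ℝ (Fin d))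
    (hg : ∀ i, g i ≠ 0)
    (hhull : (0 : EuclideanSpace ℝ (Fin d)) ∉
      convexHull ℝ (Set.range fun i => ‖g i‖⁻¹ • g i))
    (β : Fin T → ℝ) (hβ0 : ∀ i, 0 ≤ β i) (hβ1 : ∑ i, β i = 1)
    (hmin : ∀ β' : Fin T → ℝ, (∀ i, 0 ≤ β' i) → ∑ i, β' i = 1 →
      ‖∑ i, β i • (‖g i‖⁻¹ • g i)‖ ^ 2 ≤ ‖∑ i, β' i • (‖g i‖⁻¹ • g i)‖ ^ 2)
    (db : EuclideanSpace ℝ (Fin d)) (hdb : db = ∑ i, β i • (‖g i‖⁻¹ • g i))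
    (hdb0 : db ≠ 0) :
    ∀ i, ‖db‖ ^ 2 * ‖g i‖ ≤ ⟪db, g i⟫ ∧ 0 < ‖db‖ ^ 2 * ‖g i‖ :=
  edm_common_descent_general g hg β hβ0 hβ1 hmin db hdb hdb0
end
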